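/- First-order optimality criterion: α ∈ M(T, η̄) equals the unique minimizer α_opt of Φ over M(T, η̄) if and only if ∫₀ᵀ h[α](t) α̃(t) dt ≤ ∫₀ᵀ h[α](t) α(t) dt for every α̃ ∈ M(T, η̄). -/

import Mathlib

open MeasureTheory intervalIntegral Real Set Filter Topology

noncomputable def Kker (T δ ηb t r : ℝ) : ℝ :=
  if r < t then (1 - Real.exp (-(ηb + δ) * T))⁻¹ else (Real.exp ((ηb + δ) * T) - 1)⁻¹

noncomputable def Sfun (T δ ηb : ℝ) (c α : ℝ → ℝ) (t : ℝ) : ℝ :=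
  Real.exp (-(α t) - δ * t) * ∫ r in (0:ℝ)..T, Kker T δ ηb t r * c r * Real.exp (α r + δ * r)

noncomputable def Phi (T δ ηb : ℝ) (c w α : ℝ → ℝ) : ℝ :=
  ∫ t in (0:ℝ)..T, w t * Sfun T δ ηb c α t

def MemM (T ηb : ℝ) (α : ℝ → ℝ) : Prop :=
  Monotone α ∧ (∀ t, ContinuousWithinAt α (Set.Ici t) t) ∧ α 0 = 0 ∧
    (∀ t, α (t + T) = α t + α T) ∧ α T = T * ηb

noncomputable def hfun (T δ ηb : ℝ) (c w α : ℝ → ℝ) (t : ℝ) : ℝ :=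
  w t * Real.exp (-(α t) - δ * t) *
      (∫ r in (0:ℝ)..T, Kker T δ ηb t r * c r * Real.exp (α r + δ * r)) -
    c t * Real.exp (α t + δ * t) *
      (∫ r in (0:ℝ)..T, Kker T δ ηb r t * w r * Real.exp (-(α r) - δ * r))

noncomputable def psi (T δ ηb : ℝ) (c w α : ℝ → ℝ) (t : ℝ) : ℝ :=
  - ∫ s in (0:ℝ)..t, hfun T δ ηb c w α s

def SuppM (α : ℝ → ℝ) : Set ℝ := {t | ∀ ε > 0, 0 < α (t + ε) - α (t - ε)}

def IsOpt (T δ ηb : ℝ) (c w α : ℝ → ℝ) : Prop :=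
  MemM T ηb α ∧ ∀ β, MemM T ηb β → Phi T δ ηb c w α ≤ Phi T δ ηb c w β

/-! In the variable `γ − α`, the cost is an exponential tilt of a fixed nonnegative density:
`Φ(γ) = ∬ P_α(t, r) exp(x(t, r)) dt dr` with `P_α(t, r) = w(t) K(t, r) c(r) e^{α(r) − α(t) + δ(r − t)}`
and `x(t, r) = (γ − α)(r) − (γ − α)(t)`, while `∫ h[α] (β − α) = −∬ P_α x` by Fubini.
Hence `1 + x ≤ eˣ` shows that the variational inequality forces `Φ(α) ≤ Φ(β)`, and
conversely `e^{εx} ≤ 1 + εx + ε²x²` along the segment `α + ε(β − α)` shows that minimality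
forces `∬ P_α x ≥ 0` after letting `ε → 0`. -/

lemma Real.exp_le_one_add_add_sq {x : ℝ} (hx : |x| ≤ 1) : exp x ≤ 1 + x + x ^ 2 := by
  linarith [(abs_le.mp (Real.abs_exp_sub_one_sub_id_le hx)).2]

section ExponentialTilt

variable {Ω : Type*} [MeasurableSpace Ω] {μ : Measure Ω} {P x : Ω → ℝ} {M : ℝ}

lemma integrable_mul_exp_of_abs_le (hP : Integrable P μ) (hx : AEStronglyMeasurable x μ)
    (hxM : ∀ᵐ z ∂μ, |x z| ≤ M) : Integrable (fun z => P z * exp (x z)) μ := by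
  refine hP.mul_bdd (continuous_exp.comp_aestronglyMeasurable hx) (c := exp M) ?_
  filter_upwards [hxM] with z hz
  rw [norm_of_nonneg (exp_pos _).le]
  exact exp_le_exp.mpr ((le_abs_self _).trans hz)

lemma integral_add_integral_mul_le_integral_mul_exp (hP0 : 0 ≤ᵐ[μ] P) (hP : Integrable P μ)
    (hx : AEStronglyMeasurable x μ) (hxM : ∀ᵐ z ∂μ, |x z| ≤ M) :
    ∫ z, P z ∂μ + ∫ z, P z * x z ∂μ ≤ ∫ z, P z * exp (x z) ∂μ := by
  rw [← integral_add hP (hP.mul_bdd hx hxM)]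
  refine integral_mono_ae (hP.add (hP.mul_bdd hx hxM))
    (integrable_mul_exp_of_abs_le hP hx hxM) ?_
  filter_upwards [hP0] with z hz
  nlinarith [mul_le_mul_of_nonneg_left (add_one_le_exp (x z)) hz]

lemma integral_mul_exp_le_of_mul_le_one (hP0 : 0 ≤ᵐ[μ] P) (hP : Integrable P μ)
    (hx : AEStronglyMeasurable x μ) (hxM : ∀ᵐ z ∂μ, |x z| ≤ M) {ε : ℝ} (hε : 0 ≤ ε)
    (hεM : ε * M ≤ 1) :
    ∫ z, P z * exp (ε * x z) ∂μ ≤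
      ∫ z, P z ∂μ + ε * ∫ z, P z * x z ∂μ + ε ^ 2 * M ^ 2 * ∫ z, P z ∂μ := by
  have hεx : ∀ᵐ z ∂μ, |ε * x z| ≤ ε * M := by
    filter_upwards [hxM] with z hz
    rw [abs_mul, abs_of_nonneg hε]
    exact mul_le_mul_of_nonneg_left hz hε
  have hPx := hP.mul_bdd hx hxM
  have hlin : Integrable (fun z => P z + ε * (P z * x z)) μ := hP.add (hPx.const_mul ε)
  calc ∫ z, P z * exp (ε * x z) ∂μ
      ≤ ∫ z, P z + ε * (P z * x z) + ε ^ 2 * M ^ 2 * P z ∂μ :=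
        integral_mono_ae (integrable_mul_exp_of_abs_le hP (hx.const_mul ε) hεx)
          (hlin.add (hP.const_mul _)) ?_
    _ = _ := by
        rw [integral_add hlin (hP.const_mul _), integral_add hP (hPx.const_mul ε),
          MeasureTheory.integral_const_mul, MeasureTheory.integral_const_mul]
  filter_upwards [hP0, hxM, hεx] with z hPz hz hεz
  have hsq : (ε * x z) ^ 2 ≤ ε ^ 2 * M ^ 2 := by
    rw [← mul_pow, ← sq_abs]
    exact pow_le_pow_left₀ (abs_nonneg _) hεz 2
  have hexp := exp_le_one_add_add_sq (hεz.trans hεM)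
  nlinarith [mul_le_mul_of_nonneg_left hexp hPz, mul_le_mul_of_nonneg_left hsq hPz]

lemma integral_mul_nonneg_of_forall_integral_le_integral_mul_exp (hP0 : 0 ≤ᵐ[μ] P)
    (hP : Integrable P μ) (hx : AEStronglyMeasurable x μ) (hxM : ∀ᵐ z ∂μ, |x z| ≤ M)
    (hmin : ∀ ε ∈ Ioc (0 : ℝ) 1, ∫ z, P z ∂μ ≤ ∫ z, P z * exp (ε * x z) ∂μ) :
    0 ≤ ∫ z, P z * x z ∂μ := by
  set I := ∫ z, P z * x z ∂μ
  set Q := ∫ z, P z ∂μ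
  have hlim : Tendsto (fun ε => I + ε * (M ^ 2 * Q)) (𝓝[>] 0) (𝓝 I) := by
    have h : Tendsto (fun ε => I + ε * (M ^ 2 * Q)) (𝓝 0) (𝓝 (I + 0 * (M ^ 2 * Q))) :=
      (continuous_const.add (continuous_id.mul continuous_const)).tendsto 0
    simpa using h.mono_left nhdsWithin_le_nhds
  have hε₀ : (0 : ℝ) < min 1 (|M| + 1)⁻¹ := by positivity
  refine ge_of_tendsto hlim ?_
  filter_upwards [Ioo_mem_nhdsGT hε₀] with ε ⟨hε, hεlt⟩
  have hε1 : ε ≤ 1 := hεlt.le.trans (min_le_left _ _)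
  have hεM : ε * M ≤ 1 := by
    have h := hεlt.trans_le (min_le_right _ _)
    rw [← one_div, lt_div_iff₀ (by positivity)] at h
    nlinarith [le_abs_self M]
  have h := (hmin ε ⟨hε, hε1⟩).trans (integral_mul_exp_le_of_mul_le_one hP0 hP hx hxM hε.le hεM)
  nlinarith

end ExponentialTilt

section CostFunctional

variable {T δ ηb : ℝ} {c w α β γ : ℝ → ℝ}

lemma Kker_nonneg (h : 0 ≤ (ηb + δ) * T) (t r : ℝ) : 0 ≤ Kker T δ ηb t r := by
  unfold Kker
  split
  · have : exp (-(ηb + δ) * T) ≤ 1 := exp_le_one_iff.mpr (by linarith)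
    exact inv_nonneg.mpr (by linarith)
  · exact inv_nonneg.mpr (by linarith [add_one_le_exp ((ηb + δ) * T)])

lemma abs_Kker_le (t r : ℝ) :
    |Kker T δ ηb t r| ≤ |(1 - exp (-(ηb + δ) * T))⁻¹| + |(exp ((ηb + δ) * T) - 1)⁻¹| := by
  unfold Kker
  split <;> simp

lemma measurable_Kker : Measurable fun z : ℝ × ℝ => Kker T δ ηb z.1 z.2 :=
  Measurable.ite (measurableSet_lt measurable_snd measurable_fst) measurable_const measurable_const

lemma MemM.mem_Icc (hγ : MemM T ηb γ) {t : ℝ} (ht : t ∈ Icc 0 T) : γ t ∈ Icc 0 (T * ηb) :=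
  ⟨hγ.2.2.1 ▸ hγ.1 ht.1, hγ.2.2.2.2 ▸ hγ.1 ht.2⟩

lemma MemM.abs_apply_le (hγ : MemM T ηb γ) {t : ℝ} (ht : t ∈ Icc 0 T) : |γ t| ≤ T * ηb :=
  abs_le.mpr ⟨by linarith [(hγ.mem_Icc ht).1, (hγ.mem_Icc ht).2], (hγ.mem_Icc ht).2⟩

lemma MemM.add_mul_sub (hα : MemM T ηb α) (hβ : MemM T ηb β) {ε : ℝ} (h0 : 0 ≤ ε)
    (h1 : ε ≤ 1) : MemM T ηb fun t => α t + ε * (β t - α t) := by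
  obtain ⟨hαm, hαc, hα0, hαp, hαT⟩ := hα
  obtain ⟨hβm, hβc, hβ0, hβp, hβT⟩ := hβ
  refine ⟨fun s t hst => ?_, fun t => ?_, by simp [hα0, hβ0], fun t => ?_, ?_⟩
  · nlinarith [mul_nonneg h0 (sub_nonneg.mpr (hβm hst)),
      mul_nonneg (sub_nonneg.mpr h1) (sub_nonneg.mpr (hαm hst))]
  · exact (hαc t).add (continuousWithinAt_const.mul ((hβc t).sub (hαc t)))
  · simp only [hαp t, hβp t]; ring
  · simp only [hαT, hβT]; ring

variable (T) in
noncomputable abbrev squareVolume : Measure (ℝ × ℝ) :=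
  (volume.restrict (Ioc 0 T)).prod (volume.restrict (Ioc 0 T))

lemma ae_mem_squareVolume : ∀ᵐ z ∂squareVolume T, z.1 ∈ Icc 0 T ∧ z.2 ∈ Icc 0 T := by
  rw [squareVolume, Measure.prod_restrict]
  filter_upwards [ae_restrict_mem (measurableSet_Ioc.prod measurableSet_Ioc)] with z hz
  exact ⟨Ioc_subset_Icc_self hz.1, Ioc_subset_Icc_self hz.2⟩

variable (T δ ηb c w) in
noncomputable def phiIntegrand (γ : ℝ → ℝ) (z : ℝ × ℝ) : ℝ :=
  w z.1 * exp (-(γ z.1) - δ * z.1) * (Kker T δ ηb z.1 z.2 * c z.2 * exp (γ z.2 + δ * z.2))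

def phiLogRatio (α β : ℝ → ℝ) (z : ℝ × ℝ) : ℝ := (β z.2 - α z.2) - (β z.1 - α z.1)

lemma phiIntegrand_nonneg (hK : 0 ≤ (ηb + δ) * T) (hc0 : ∀ t, 0 ≤ c t) (hw0 : ∀ t, 0 ≤ w t)
    (γ : ℝ → ℝ) (z : ℝ × ℝ) : 0 ≤ phiIntegrand T δ ηb c w γ z := by
  unfold phiIntegrand
  have := Kker_nonneg hK z.1 z.2
  have := hc0 z.2
  have := hw0 z.1
  positivity

lemma phiIntegrand_eq_mul_exp (α β : ℝ → ℝ) (z : ℝ × ℝ) :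
    phiIntegrand T δ ηb c w β z = phiIntegrand T δ ηb c w α z * exp (phiLogRatio α β z) := by
  have h : exp (-(β z.1) - δ * z.1) * exp (β z.2 + δ * z.2) =
      exp (-(α z.1) - δ * z.1) * exp (α z.2 + δ * z.2) * exp (phiLogRatio α β z) := by
    simp only [← exp_add, phiLogRatio]; ring_nf
  unfold phiIntegrand
  linear_combination w z.1 * Kker T δ ηb z.1 z.2 * c z.2 * h

lemma phiLogRatio_add_mul_sub (α β : ℝ → ℝ) (ε : ℝ) (z : ℝ × ℝ) :
    phiLogRatio α (fun t => α t + ε * (β t - α t)) z = ε * phiLogRatio α β z := by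
  simp only [phiLogRatio]; ring

lemma ae_abs_phiLogRatio_le (hα : MemM T ηb α) (hβ : MemM T ηb β) :
    ∀ᵐ z ∂squareVolume T, |phiLogRatio α β z| ≤ 4 * (T * ηb) := by
  filter_upwards [ae_mem_squareVolume] with z ⟨h1, h2⟩
  have := abs_le.mp (hα.abs_apply_le h1)
  have := abs_le.mp (hα.abs_apply_le h2)
  have := abs_le.mp (hβ.abs_apply_le h1)
  have := abs_le.mp (hβ.abs_apply_le h2)
  exact abs_le.mpr ⟨by unfold phiLogRatio; linarith, by unfold phiLogRatio; linarith⟩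

lemma integrable_phiIntegrand (hδ : 0 ≤ δ) (hcI : IntegrableOn c (Icc 0 T))
    (hwI : IntegrableOn w (Icc 0 T)) (hγ : MemM T ηb γ) :
    Integrable (phiIntegrand T δ ηb c w γ) (squareVolume T) := by
  have hwc : Integrable (fun z : ℝ × ℝ => w z.1 * c z.2) (squareVolume T) :=
    (hwI.mono_set Ioc_subset_Icc_self).mul_prod (hcI.mono_set Ioc_subset_Icc_self)
  have hm := hγ.1.measurable
  have hmeas : Measurable fun z : ℝ × ℝ =>
      exp (-(γ z.1) - δ * z.1) * Kker T δ ηb z.1 z.2 * exp (γ z.2 + δ * z.2) := by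
    have := measurable_Kker (T := T) (δ := δ) (ηb := ηb)
    fun_prop
  refine (hwc.mul_bdd hmeas.aestronglyMeasurable (c := exp (T * ηb + δ * T) *
      (|(1 - exp (-(ηb + δ) * T))⁻¹| + |(exp ((ηb + δ) * T) - 1)⁻¹|)) ?_).congr
    (ae_of_all _ fun z => by simp only [phiIntegrand]; ring)
  filter_upwards [ae_mem_squareVolume] with z ⟨h1, h2⟩
  have e1 : exp (-(γ z.1) - δ * z.1) ≤ 1 :=
    exp_le_one_iff.mpr (by nlinarith [(hγ.mem_Icc h1).1, h1.1])
  have e2 : exp (γ z.2 + δ * z.2) ≤ exp (T * ηb + δ * T) :=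
    exp_le_exp.mpr (by nlinarith [(hγ.mem_Icc h2).2, h2.2])
  rw [norm_mul, norm_mul, Real.norm_of_nonneg (exp_pos _).le, Real.norm_of_nonneg (exp_pos _).le,
    Real.norm_eq_abs]
  calc exp (-(γ z.1) - δ * z.1) * |Kker T δ ηb z.1 z.2| * exp (γ z.2 + δ * z.2)
      ≤ 1 * (|(1 - exp (-(ηb + δ) * T))⁻¹| + |(exp ((ηb + δ) * T) - 1)⁻¹|) *
          exp (T * ηb + δ * T) := by gcongr; exact abs_Kker_le _ _
    _ = _ := by ring

lemma Phi_eq_integral_phiIntegrand (hT : 0 ≤ T)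
    (hint : Integrable (phiIntegrand T δ ηb c w γ) (squareVolume T)) :
    Phi T δ ηb c w γ = ∫ z, phiIntegrand T δ ηb c w γ z ∂squareVolume T := by
  have h : ∀ t, w t * Sfun T δ ηb c γ t = ∫ r in (0)..T, phiIntegrand T δ ηb c w γ (t, r) := by
    intro t
    simp only [phiIntegrand, Sfun, intervalIntegral.integral_const_mul]
    ring
  rw [Phi, intervalIntegral.integral_congr fun t _ => h t, integral_of_le hT]
  simp_rw [integral_of_le hT]
  exact integral_integral hint

lemma integral_hfun_mul_eq (hT : 0 ≤ T) {v : ℝ → ℝ}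
    (hfst : Integrable (fun z => phiIntegrand T δ ηb c w α z * v z.1) (squareVolume T))
    (hsnd : Integrable (fun z => phiIntegrand T δ ηb c w α z * v z.2) (squareVolume T)) :
    ∫ t in (0)..T, hfun T δ ηb c w α t * v t =
      ∫ z, phiIntegrand T δ ηb c w α z * (v z.1 - v z.2) ∂squareVolume T := by
  have hswap : Integrable (fun z => phiIntegrand T δ ηb c w α z.swap * v z.1) (squareVolume T) :=
    hsnd.swap
  have h : ∀ t, hfun T δ ηb c w α t * v t =
      (∫ r in (0)..T, phiIntegrand T δ ηb c w α (t, r) * v t) -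
        ∫ r in (0)..T, phiIntegrand T δ ηb c w α (r, t) * v t := by
    intro t
    simp only [hfun, phiIntegrand, intervalIntegral.integral_mul_const,
      intervalIntegral.integral_const_mul]
    have e : ∫ r in (0)..T, w r * exp (-(α r) - δ * r) *
          (Kker T δ ηb r t * c t * exp (α t + δ * t)) =
        (∫ r in (0)..T, Kker T δ ηb r t * w r * exp (-(α r) - δ * r)) *
          (c t * exp (α t + δ * t)) := by
      rw [← intervalIntegral.integral_mul_const]
      exact intervalIntegral.integral_congr fun r _ => by ring
    rw [e]
    ring
  have hA : Integrable (fun t => ∫ r in Ioc 0 T, phiIntegrand T δ ηb c w α (t, r) * v t)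
      (volume.restrict (Ioc 0 T)) := hfst.integral_prod_left
  have hB : Integrable (fun t => ∫ r in Ioc 0 T, phiIntegrand T δ ηb c w α (r, t) * v t)
      (volume.restrict (Ioc 0 T)) := hswap.integral_prod_left
  have hB' : (∫ t in Ioc 0 T, ∫ r in Ioc 0 T, phiIntegrand T δ ηb c w α (r, t) * v t) =
      ∫ z, phiIntegrand T δ ηb c w α z * v z.2 ∂squareVolume T :=
    (integral_integral hswap).trans
      (integral_prod_swap fun z : ℝ × ℝ => phiIntegrand T δ ηb c w α z * v z.2)
  rw [intervalIntegral.integral_congr fun t _ => h t, integral_of_le hT]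
  simp_rw [integral_of_le hT]
  rw [MeasureTheory.integral_sub hA hB, integral_integral hfst, hB',
    ← MeasureTheory.integral_sub hfst hsnd]
  simp only [mul_sub]

lemma integral_hfun_mul_sub_eq (hT : 0 ≤ T) (hδ : 0 ≤ δ) (hcI : IntegrableOn c (Icc 0 T))
    (hwI : IntegrableOn w (Icc 0 T)) (hα : MemM T ηb α) (hβ : MemM T ηb β) :
    (∫ t in (0)..T, hfun T δ ηb c w α t * β t) - ∫ t in (0)..T, hfun T δ ηb c w α t * α t =
      -∫ z, phiIntegrand T δ ηb c w α z * phiLogRatio α β z ∂squareVolume T := by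
  have hP := integrable_phiIntegrand hδ hcI hwI hα
  have hint : ∀ {v : ℝ → ℝ}, MemM T ηb v → ∀ i : ℝ × ℝ → ℝ, Measurable i →
      (∀ᵐ z ∂squareVolume T, i z ∈ Icc 0 T) →
      Integrable (fun z => phiIntegrand T δ ηb c w α z * v (i z)) (squareVolume T) :=
    fun hv i hi hiT => hP.mul_bdd (hv.1.measurable.comp hi).aestronglyMeasurable
      (hiT.mono fun z hz => hv.abs_apply_le hz)
  have hfst : ∀ᵐ z ∂squareVolume T, z.1 ∈ Icc 0 T := ae_mem_squareVolume.mono fun _ h => h.1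
  have hsnd : ∀ᵐ z ∂squareVolume T, z.2 ∈ Icc 0 T := ae_mem_squareVolume.mono fun _ h => h.2
  have hdiff : ∀ {v : ℝ → ℝ}, MemM T ηb v →
      Integrable (fun z => phiIntegrand T δ ηb c w α z * (v z.1 - v z.2)) (squareVolume T) :=
    fun hv => ((hint hv _ measurable_fst hfst).sub (hint hv _ measurable_snd hsnd)).congr
      (ae_of_all _ fun z => (mul_sub _ _ _).symm)
  rw [integral_hfun_mul_eq hT (hint hβ _ measurable_fst hfst) (hint hβ _ measurable_snd hsnd),
    integral_hfun_mul_eq hT (hint hα _ measurable_fst hfst) (hint hα _ measurable_snd hsnd),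
    ← MeasureTheory.integral_sub (hdiff hβ) (hdiff hα), ← MeasureTheory.integral_neg]
  simp only [phiLogRatio]
  congr 1 with z
  ring

lemma Phi_eq_integral_mul_exp (hT : 0 ≤ T) (hδ : 0 ≤ δ) (hcI : IntegrableOn c (Icc 0 T))
    (hwI : IntegrableOn w (Icc 0 T)) (α : ℝ → ℝ) (hβ : MemM T ηb β) :
    Phi T δ ηb c w β =
      ∫ z, phiIntegrand T δ ηb c w α z * exp (phiLogRatio α β z) ∂squareVolume T := by
  rw [Phi_eq_integral_phiIntegrand hT (integrable_phiIntegrand hδ hcI hwI hβ)]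
  simp only [phiIntegrand_eq_mul_exp α β]

end CostFunctional

theorem stmt6_general (T δ ηb : ℝ) (c w α : ℝ → ℝ)
    (hT : 0 < T) (hδ : 0 < δ) (hη : 0 < ηb)
    (hc0 : ∀ t, 0 ≤ c t) (hcI : IntegrableOn c (Set.Icc 0 T))
    (hw0 : ∀ t, 0 ≤ w t) (hwI : IntegrableOn w (Set.Icc 0 T))
    (hα : MemM T ηb α) :
    (∀ β, MemM T ηb β → Phi T δ ηb c w α ≤ Phi T δ ηb c w β) ↔
      (∀ β, MemM T ηb β →
        (∫ t in (0:ℝ)..T, hfun T δ ηb c w α t * β t) ≤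
          ∫ t in (0:ℝ)..T, hfun T δ ηb c w α t * α t) := by
  have hP := integrable_phiIntegrand hδ.le hcI hwI hα
  have hP0 : 0 ≤ᵐ[squareVolume T] phiIntegrand T δ ηb c w α :=
    ae_of_all _ (phiIntegrand_nonneg (by positivity) hc0 hw0 α)
  have hPhiα : Phi T δ ηb c w α = ∫ z, phiIntegrand T δ ηb c w α z ∂squareVolume T :=
    Phi_eq_integral_phiIntegrand hT.le hP
  have hx : ∀ {β}, MemM T ηb β → AEStronglyMeasurable (phiLogRatio α β) (squareVolume T) :=
    fun hβ => by
      have := hα.1.measurable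
      have := hβ.1.measurable
      unfold phiLogRatio
      fun_prop
  refine ⟨fun hmin β hβ => ?_, fun hvar β hβ => ?_⟩
  · rw [← sub_nonpos, integral_hfun_mul_sub_eq hT.le hδ.le hcI hwI hα hβ, neg_nonpos]
    refine integral_mul_nonneg_of_forall_integral_le_integral_mul_exp hP0 hP (hx hβ)
      (ae_abs_phiLogRatio_le hα hβ) fun ε hε => ?_
    have hγ := hα.add_mul_sub hβ hε.1.le hε.2
    calc ∫ z, phiIntegrand T δ ηb c w α z ∂squareVolume T
        = Phi T δ ηb c w α := hPhiα.symm
      _ ≤ Phi T δ ηb c w (fun t => α t + ε * (β t - α t)) := hmin _ hγ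
      _ = _ := by
          simp only [Phi_eq_integral_mul_exp hT.le hδ.le hcI hwI α hγ, phiLogRatio_add_mul_sub]
  · have hnonneg : 0 ≤ ∫ z, phiIntegrand T δ ηb c w α z * phiLogRatio α β z ∂squareVolume T := by
      linarith [hvar β hβ, integral_hfun_mul_sub_eq hT.le hδ.le hcI hwI hα hβ]
    calc Phi T δ ηb c w α
        ≤ (∫ z, phiIntegrand T δ ηb c w α z ∂squareVolume T) +
            ∫ z, phiIntegrand T δ ηb c w α z * phiLogRatio α β z ∂squareVolume T := by
          linarith
      _ ≤ _ := integral_add_integral_mul_le_integral_mul_exp hP0 hP (hx hβ)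
          (ae_abs_phiLogRatio_le hα hβ)
      _ = Phi T δ ηb c w β := (Phi_eq_integral_mul_exp hT.le hδ.le hcI hwI α hβ).symm

theorem stmt6 (T δ ηb : ℝ) (c w α : ℝ → ℝ)
    (hT : 0 < T) (hδ : 0 < δ) (hη : 0 < ηb)
    (hc0 : ∀ t, 0 ≤ c t) (hcP : ∀ t, c (t + T) = c t) (hcI : IntegrableOn c (Set.Icc 0 T))
    (hw0 : ∀ t, 0 ≤ w t) (hwP : ∀ t, w (t + T) = w t) (hwI : IntegrableOn w (Set.Icc 0 T))
    (hcne : ¬ c =ᵐ[volume.restrict (Set.Icc (0:ℝ) T)] 0)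
    (hwne : ¬ w =ᵐ[volume.restrict (Set.Icc (0:ℝ) T)] 0)
    (hpos : (∀ᵐ t ∂volume, 0 < c t) ∨ (∀ᵐ t ∂volume, 0 < w t))
    (hα : MemM T ηb α) :
    (∀ β, MemM T ηb β → Phi T δ ηb c w α ≤ Phi T δ ηb c w β) ↔
      (∀ β, MemM T ηb β →
        (∫ t in (0:ℝ)..T, hfun T δ ηb c w α t * β t) ≤
          ∫ t in (0:ℝ)..T, hfun T δ ηb c w α t * α t) :=
  stmt6_general T δ ηb c w α hT hδ hη hc0 hcI hw0 hwI hα
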